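/- arXiv:math/0210105 — 2 statements merged into one kernel-verified Lean document; each statement's English description precedes it below -/
import Mathlib

section
/- Let k be a field of characteristic 2. The formula (a,b,c,d)^{(λ,ν)} = (λ⁵a, λ⁴(b + E_{a,c}(ν)), λ³c, d + aν⁵ + bν⁴ + cν³) (last coordinate taken modulo AS(k)) defines a right action of the affine group k* ⋊ k on the set N = k* × k × k × (k/AS(k)); that is, ((a,b,c,d)^{g})^{h} = (a,b,c,d)^{gh} for all g, h ∈ k* ⋊ k, and the identity acts trivially. -/
/-- The image of the Artin–Schreier map `x ↦ x + x²` of a field of characteristic 2,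
as an additive subgroup. -/
def ASrange (k : Type*) [Field k] [CharP k 2] : AddSubgroup k where
  carrier := Set.range fun x : k => x + x ^ 2
  zero_mem' := ⟨0, by ring⟩
  add_mem' := by
    rintro _ _ ⟨x, rfl⟩ ⟨y, rfl⟩
    refine ⟨x + y, ?_⟩
    have h2 : (2 : k) = 0 := by exact_mod_cast CharP.cast_eq_zero k 2
    linear_combination (x * y) * h2
  neg_mem' := by
    rintro _ ⟨x, rfl⟩
    refine ⟨x, ?_⟩
    have h2 : (2 : k) = 0 := by exact_mod_cast CharP.cast_eq_zero k 2
    linear_combination (x + x ^ 2) * h2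

/-- The affine group `k* ⋊ k`: pairs `(λ, ν)` with multiplication
`(λ,ν)·(λ′,ν′) = (λλ′, λν′ + ν)`, i.e. composition of the affine maps `x ↦ λx + ν`. -/
@[ext]
structure Aff (k : Type*) [Field k] where
  fst : kˣ
  snd : k

namespace Aff

variable {k : Type*} [Field k]

instance : Mul (Aff k) := ⟨fun g h => ⟨g.fst * h.fst, (g.fst : k) * h.snd + g.snd⟩⟩
instance : One (Aff k) := ⟨⟨1, 0⟩⟩
instance : Inv (Aff k) := ⟨fun g => ⟨g.fst⁻¹, -((g.fst⁻¹ : k) * g.snd)⟩⟩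

@[simp] theorem mul_fst (g h : Aff k) : (g * h).fst = g.fst * h.fst := rfl
@[simp] theorem mul_snd (g h : Aff k) : (g * h).snd = (g.fst : k) * h.snd + g.snd := rfl
@[simp] theorem one_fst : (1 : Aff k).fst = 1 := rfl
@[simp] theorem one_snd : (1 : Aff k).snd = 0 := rfl
@[simp] theorem inv_fst (g : Aff k) : (g⁻¹).fst = g.fst⁻¹ := rfl
@[simp] theorem inv_snd (g : Aff k) : (g⁻¹).snd = -((g.fst⁻¹ : k) * g.snd) := rfl

instance : Group (Aff k) where
  mul_assoc a b c := by
    ext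
    · simp [mul_assoc]
    · simp; ring
  one_mul a := by ext <;> simp
  mul_one a := by ext <;> simp
  inv_mul_cancel a := by
    ext
    · simp
    · have h : (a.fst : k) ≠ 0 := Units.ne_zero _
      simp

end Aff

/-- The additive polynomial `E_{a,c}(x) = a⁴x¹⁶ + c⁴x⁸ + c²x² + ax`. -/
def Efun {k : Type*} [Field k] (a c x : k) : k :=
  a ^ 4 * x ^ 16 + c ^ 4 * x ^ 8 + c ^ 2 * x ^ 2 + a * x

open scoped Classical

/-- The subset `Γ_{abc}` of the affine group `k* ⋊ k`: for `c ≠ 0` it is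
`{(1,ν) : E_{a,c}(ν) = 0}`, and for `c = 0` it is `{(λ,ν) : λ⁵ = 1, E_{a,c}(ν) = b(1+λ)}`. -/
def GammaSet {k : Type*} [Field k] (a : kˣ) (b c : k) : Set (Aff k) :=
  {g | if c = 0 then ((g.fst : k) ^ 5 = 1 ∧ Efun (a : k) c g.snd = b * (1 + (g.fst : k)))
       else (g.fst = 1 ∧ Efun (a : k) c g.snd = 0)}

/-- The map `δ_{abc} : Γ_{abc} → k/AS(k)`, `(λ,ν) ↦ aν⁵ + bν⁴ + cν³ mod AS(k)`. -/
def deltaMap {k : Type*} [Field k] [CharP k 2] (a : kˣ) (b c : k) (g : Aff k) :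
    k ⧸ ASrange k :=
  QuotientAddGroup.mk ((a : k) * g.snd ^ 5 + b * g.snd ^ 4 + c * g.snd ^ 3)

/-- The right action of the affine group `k* ⋊ k` on
`N = k* × k × k × (k/AS(k))` given by
`(a,b,c,d)^{(λ,ν)} = (λ⁵a, λ⁴(b + E_{a,c}(ν)), λ³c, d + aν⁵ + bν⁴ + cν³)`. -/
def actAff {k : Type*} [Field k] [CharP k 2]
    (n : kˣ × k × k × (k ⧸ ASrange k)) (g : Aff k) : kˣ × k × k × (k ⧸ ASrange k) :=
  (g.fst ^ 5 * n.1,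
   (g.fst : k) ^ 4 * (n.2.1 + Efun (n.1 : k) n.2.2.1 g.snd),
   (g.fst : k) ^ 3 * n.2.2.1,
   n.2.2.2 + QuotientAddGroup.mk
      ((n.1 : k) * g.snd ^ 5 + n.2.1 * g.snd ^ 4 + n.2.2.1 * g.snd ^ 3))

/-- Let `k` be a field of characteristic 2.  The formula
`(a,b,c,d)^{(λ,ν)} = (λ⁵a, λ⁴(b + E_{a,c}(ν)), λ³c, d + aν⁵ + bν⁴ + cν³)` (last coordinate
taken modulo `AS(k)`) defines a right action of the affine group `k* ⋊ k` on
`N = k* × k × k × (k/AS(k))`. -/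
theorem actAff_is_right_action {k : Type*} [Field k] [CharP k 2] :
    (∀ (n : kˣ × k × k × (k ⧸ ASrange k)) (g h : Aff k),
        actAff (actAff n g) h = actAff n (g * h)) ∧
    (∀ n : kˣ × k × k × (k ⧸ ASrange k), actAff n 1 = n) := by
  have h2 : (2 : k) = 0 := by exact_mod_cast CharP.cast_eq_zero k 2
  constructor
  · rintro ⟨a, b, c, d⟩ ⟨L, V⟩ ⟨M, W⟩
    simp only [actAff, Efun, Aff.mul_fst, Aff.mul_snd, Prod.mk.injEq]
    refine ⟨?_, ?_, ?_, ?_⟩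
    · rw [mul_pow, mul_comm (L ^ 5) (M ^ 5), mul_assoc]
    · push_cast
      linear_combination ((-1 : k)*c^2*(L : k)^5*V*(M : k)^4*W + (-4 : k)*c^4*(L : k)^5*V^7*(M : k)^4*W + (-14 : k)*c^4*(L : k)^6*V^6*(M : k)^4*W^2 + (-28 : k)*c^4*(L : k)^7*V^5*(M : k)^4*W^3 + (-35 : k)*c^4*(L : k)^8*V^4*(M : k)^4*W^4 + (-28 : k)*c^4*(L : k)^9*V^3*(M : k)^4*W^5 + (-14 : k)*c^4*(L : k)^10*V^2*(M : k)^4*W^6 + (-4 : k)*c^4*(L : k)^11*V*(M : k)^4*W^7 + (-8 : k)*(a : k)^4*(L : k)^5*V^15*(M : k)^4*W + (-60 : k)*(a : k)^4*(L : k)^6*V^14*(M : k)^4*W^2 + (-280 : k)*(a : k)^4*(L : k)^7*V^13*(M : k)^4*W^3 + (-910 : k)*(a : k)^4*(L : k)^8*V^12*(M : k)^4*W^4 + (-2184 : k)*(a : k)^4*(L : k)^9*V^11*(M : k)^4*W^5 + (-4004 : k)*(a : k)^4*(L : k)^10*V^10*(M : k)^4*W^6 + (-5720 : k)*(a : k)^4*(L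 : k)^11*V^9*(M : k)^4*W^7 + (-6435 : k)*(a : k)^4*(L : k)^12*V^8*(M : k)^4*W^8 + (-5720 : k)*(a : k)^4*(L : k)^13*V^7*(M : k)^4*W^9 + (-4004 : k)*(a : k)^4*(L : k)^14*V^6*(M : k)^4*W^10 + (-2184 : k)*(a : k)^4*(L : k)^15*V^5*(M : k)^4*W^11 + (-910 : k)*(a : k)^4*(L : k)^16*V^4*(M : k)^4*W^12 + (-280 : k)*(a : k)^4*(L : k)^17*V^3*(M : k)^4*W^13 + (-60 : k)*(a : k)^4*(L : k)^18*V^2*(M : k)^4*W^14 + (-8 : k)*(a : k)^4*(L : k)^19*V*(M : k)^4*W^15) * h2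
    · push_cast
      ring
    · rw [add_assoc, ← QuotientAddGroup.mk_add]
      refine congrArg (d + ·) ?_
      rw [QuotientAddGroup.eq]
      refine ⟨c*(L : k)*V^2*W + c*(L : k)^2*V*W^2 + c^2*(L : k)^2*V^4*W^2 + (a : k)*(L : k)*V^4*W + (a : k)^2*(L : k)^2*V^8*W^2, ?_⟩
      push_cast
      linear_combination ((-1 : k)*c*(L : k)*V^2*W + (-1 : k)*c*(L : k)^2*V*W^2 + c^2*(L : k)^2*V^4*W^2 + c^2*(L : k)^3*V^3*W^3 + c^2*(L : k)^4*V^2*W^4 + c^3*(L : k)^3*V^6*W^3 + c^3*(L : k)^4*V^5*W^4 + c^4*(L : k)^4*V^8*W^4 + (-2 : k)*b*(L : k)*V^3*W + (-3 : k)*b*(L : k)^2*V^2*W^2 + (-2 : k)*b*(L : k)^3*V*W^3 + (-2 : k)*(a : k)*(L : k)*V^4*W + (-5 : k)*(a : k)*(L : k)^2*V^3*W^2 + (-5 : k)*(a : k)*(L : k)^3*V^2*W^3 + (-2 : k)*(a : k)*(L : k)^4*V*W^4 + (a : k)*c*(L : k)^2*V^6*W^2 + (a : k)*c*(L : k)^3*V^5*W^3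 + (a : k)*c^2*(L : k)^3*V^8*W^3 + (a : k)^2*(L : k)^2*V^8*W^2 + (a : k)^2*c*(L : k)^3*V^10*W^3 + (a : k)^2*c*(L : k)^4*V^9*W^4 + (a : k)^2*c^2*(L : k)^4*V^12*W^4 + (a : k)^3*(L : k)^3*V^12*W^3 + (a : k)^4*(L : k)^4*V^16*W^4) * h2
  · rintro ⟨a, b, c, d⟩
    simp only [actAff, Efun, Aff.one_fst, Aff.one_snd, Units.val_one]
    refine Prod.ext ?_ (Prod.ext ?_ (Prod.ext ?_ ?_))
    all_goals simp
end

section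
/- Let k be a field of characteristic 2, a ∈ k*, b, c ∈ k, and suppose that c ≠ 0 or that k contains no fifth root of unity other than 1. Then every element of Ker(δ_{abc}) = {(λ,ν) ∈ Γ_{abc} : aν⁵ + bν⁴ + cν³ ∈ AS(k)} has order dividing 2, and Ker(δ_{abc}) has at most 16 elements; in particular Ker(δ_{abc}) is isomorphic to a subgroup of C₂ × C₂ × C₂ × C₂. -/
open scoped Classical

/-- Let `k` be a field of characteristic 2, `a ∈ k*`, `b, c ∈ k`, and
suppose that `c ≠ 0` or that `k` contains no fifth root of unity other than 1.  Then every
element of `Ker(δ_{abc}) = {(λ,ν) ∈ Γ_{abc} : aν⁵ + bν⁴ + cν³ ∈ AS(k)}` has order dividing 2,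
and `Ker(δ_{abc})` has at most 16 elements; in particular `Ker(δ_{abc})` is isomorphic to a
subgroup of `C₂ × C₂ × C₂ × C₂`. -/
theorem ker_delta_exponent_two_and_card_le
    {k : Type*} [Field k] [CharP k 2] (a : kˣ) (b c : k)
    (h : c ≠ 0 ∨ ∀ l : k, l ^ 5 = 1 → l = 1) :
    (∀ g ∈ {g : Aff k | g ∈ GammaSet a b c ∧
        (a : k) * g.snd ^ 5 + b * g.snd ^ 4 + c * g.snd ^ 3 ∈ ASrange k}, g * g = 1) ∧
    Nat.card {g : Aff k | g ∈ GammaSet a b c ∧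
        (a : k) * g.snd ^ 5 + b * g.snd ^ 4 + c * g.snd ^ 3 ∈ ASrange k} ≤ 16 := by
  have h2 : (1 : k) + 1 = 0 := by
    have h20 : (2 : k) = 0 := by exact_mod_cast CharP.cast_eq_zero k 2
    linear_combination h20
  have key : ∀ g ∈ {g : Aff k | g ∈ GammaSet a b c ∧
      (a : k) * g.snd ^ 5 + b * g.snd ^ 4 + c * g.snd ^ 3 ∈ ASrange k},
      g.fst = 1 ∧ Efun (a : k) c g.snd = 0 := by
    intro g hg
    obtain ⟨hΓ, -⟩ := hg
    by_cases hc : c = 0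
    · simp only [GammaSet, Set.mem_setOf_eq, if_pos hc] at hΓ
      obtain ⟨h5, hE⟩ := hΓ
      have hroot : ∀ l : k, l ^ 5 = 1 → l = 1 := h.resolve_left (by simp [hc])
      have hl : (g.fst : k) = 1 := hroot _ h5
      refine ⟨Units.ext hl, ?_⟩
      rw [hE, hl, h2, mul_zero]
    · simp only [GammaSet, Set.mem_setOf_eq, if_neg hc] at hΓ
      exact hΓ
  constructor
  · intro g hg
    obtain ⟨hfst, -⟩ := key g hg
    ext
    · simp [hfst]
    · simp only [Aff.mul_snd, Aff.one_snd, hfst, Units.val_one, one_mul]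
      linear_combination g.snd * h2
  · set p : Polynomial k := Polynomial.C ((a : k) ^ 4) * Polynomial.X ^ 16 +
      Polynomial.C (c ^ 4) * Polynomial.X ^ 8 + Polynomial.C (c ^ 2) * Polynomial.X ^ 2 +
      Polynomial.C (a : k) * Polynomial.X with hp
    have hdeg : p.natDegree = 16 := by
      rw [hp]; compute_degree!
    have hpne : p ≠ 0 := fun h0 => by simp [h0] at hdeg
    have heval : ∀ x : k, p.eval x = Efun (a : k) c x := by
      intro x; simp [hp, Efun]
    have hinj : ∀ g ∈ {g : Aff k | g ∈ GammaSet a b c ∧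
        (a : k) * g.snd ^ 5 + b * g.snd ^ 4 + c * g.snd ^ 3 ∈ ASrange k},
        g.snd ∈ p.roots.toFinset := by
      intro g hg
      obtain ⟨-, hE⟩ := key g hg
      rw [Multiset.mem_toFinset, Polynomial.mem_roots hpne]
      exact (heval g.snd).trans hE
    have hcard : p.roots.toFinset.card ≤ 16 := by
      calc p.roots.toFinset.card ≤ Multiset.card p.roots := p.roots.toFinset_card_le
        _ ≤ p.natDegree := p.card_roots'
        _ = 16 := hdeg
    have : Nat.card {g : Aff k | g ∈ GammaSet a b c ∧
        (a : k) * g.snd ^ 5 + b * g.snd ^ 4 + c * g.snd ^ 3 ∈ ASrange k}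
        ≤ Nat.card {x : k // x ∈ p.roots.toFinset} := by
      apply Nat.card_le_card_of_injective
        (fun g => (⟨g.1.snd, hinj g.1 g.2⟩ : {x : k // x ∈ p.roots.toFinset}))
      intro g g' hgg
      have hs : g.1.snd = g'.1.snd := congrArg Subtype.val hgg
      have h1 : g.1.fst = 1 := (key g.1 g.2).1
      have h1' : g'.1.fst = 1 := (key g'.1 g'.2).1
      exact Subtype.ext (Aff.ext (h1.trans h1'.symm) hs)
    calc Nat.card {g : Aff k | g ∈ GammaSet a b c ∧
          (a : k) * g.snd ^ 5 + b * g.snd ^ 4 + c * g.snd ^ 3 ∈ ASrange k}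
        ≤ Nat.card {x : k // x ∈ p.roots.toFinset} := this
      _ = p.roots.toFinset.card := Nat.card_eq_finsetCard _
      _ ≤ 16 := hcard
end
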